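/- arXiv:1203.6127 — 11 statements merged into one kernel-verified Lean document; each statement's English description precedes it below -/
import Mathlib

section
/- For every s ∈ H, the set {j ∈ H : j + s ∈ Ĥ} is finite and, computing in ℤ, a₁ · |{j ∈ H : j + s ∈ Ĥ}| = Σ_{0≤i<a₁} max(e((i+s) mod a₁) − b(i) − s, 0). Equivalently λ(s) = ν(s): the quantity λ(s) appearing in the Andersen–Geil minimum-distance bound d_AG equals the quantity ν(s) governing the error-correcting capability of the Lee–Bras-Amorós–O'Sullivan decoding algorithm (Proposition 2). -/
/-- Counting helper: if `E ≡ B (mod a)`, then the number of `k` with `B + a*k < E`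
is `(E-B)/a`, and `a` times that count is `max (E - B) 0` in `ℤ`. -/
lemma lambda_eq_nu_aux (a B E : ℕ) (ha : 0 < a) (hmod : E % a = B % a) :
    (∀ k : ℕ, B + a * k < E ↔ k < (E - B) / a) ∧
    (a : ℤ) * (((E - B) / a : ℕ) : ℤ) = max ((E : ℤ) - (B : ℤ)) 0 := by
  rcases le_or_gt E B with h | h
  · have h0 : E - B = 0 := Nat.sub_eq_zero_of_le h
    constructor
    · intro k
      rw [h0, Nat.zero_div]
      constructor
      · intro hk; omega
      · intro hk; omega
    · rw [h0]
      have : max ((E : ℤ) - (B : ℤ)) 0 = 0 := by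
        apply max_eq_right; omega
      rw [this]; simp
  · have hdvd : a ∣ E - B := (Nat.modEq_iff_dvd' h.le).mp (by
      unfold Nat.ModEq; omega)
    obtain ⟨q, hq⟩ := hdvd
    have hdiv : (E - B) / a = q := by rw [hq, Nat.mul_div_cancel_left _ ha]
    have hE : E = B + a * q := by omega
    constructor
    · intro k
      rw [hdiv, hE]
      constructor
      · intro hk
        have : a * k < a * q := by omega
        exact lt_of_mul_lt_mul_left this (Nat.zero_le a)
      · intro hk
        have : a * k < a * q := mul_lt_mul_of_pos_left hk ha
        omega
    · rw [hdiv]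
      have : max ((E : ℤ) - (B : ℤ)) 0 = (E : ℤ) - (B : ℤ) := by
        apply max_eq_left; omega
      rw [this]
      have : (E : ℤ) = (B : ℤ) + (a : ℤ) * (q : ℤ) := by exact_mod_cast hE
      omega

/-- Proposition 2 (λ(s) = ν(s)): for every `s ∈ H`, the set
`{j ∈ H : j + s ∈ Ĥ}` is finite and, in `ℤ`,
`a₁ · |{j ∈ H : j + s ∈ Ĥ}| = Σ_{0 ≤ i < a₁} max(e((i+s) mod a₁) − b(i) − s, 0)`. -/
theorem lambda_eq_nu
    (a₁ : ℕ) (ha : 0 < a₁) (H : AddSubmonoid ℕ) (haH : a₁ ∈ H)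
    (b : Fin a₁ → ℕ)
    (hb : ∀ i : Fin a₁, IsLeast {m | m ∈ H ∧ m % a₁ = i.val} (b i))
    (e : Fin a₁ → ℕ)
    (heH : ∀ i : Fin a₁, e i ∈ H) (hemod : ∀ i : Fin a₁, e i % a₁ = i.val)
    (Hhat : Set ℕ)
    (hHhat : Hhat = {m | m ∈ H ∧ ¬ ∃ (i : Fin a₁) (k : ℕ), m = e i + a₁ * k})
    (s : ℕ) (hs : s ∈ H) :
    {j | j ∈ H ∧ j + s ∈ Hhat}.Finite ∧
    (a₁ : ℤ) * ({j | j ∈ H ∧ j + s ∈ Hhat}.ncard : ℤ) =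
      ∑ i : Fin a₁,
        max ((e ⟨(i.val + s) % a₁, Nat.mod_lt _ ha⟩ : ℤ) - (b i : ℤ) - (s : ℤ)) 0 := by
  classical
  -- notation for the shifted residue index
  let i' : Fin a₁ → Fin a₁ := fun i => ⟨(i.val + s) % a₁, Nat.mod_lt _ ha⟩
  -- per-residue count
  let c : Fin a₁ → ℕ := fun i => (e (i' i) - (b i + s)) / a₁
  -- the mod condition needed for the aux lemma
  have hmodBE : ∀ i : Fin a₁, e (i' i) % a₁ = (b i + s) % a₁ := by
    intro i
    have h1 : e (i' i) % a₁ = (i.val + s) % a₁ := hemod (i' i)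
    have h2 : (b i + s) % a₁ = (i.val + s) % a₁ := by
      conv_lhs => rw [← Nat.mod_add_mod, (hb i).1.2]
    rw [h1, h2]
  have haux := fun i : Fin a₁ =>
    lambda_eq_nu_aux a₁ (b i + s) (e (i' i)) ha (hmodBE i)
  -- membership in Hhat characterized by size
  have hA : ∀ m : ℕ, m ∈ Hhat ↔ m ∈ H ∧ m < e ⟨m % a₁, Nat.mod_lt _ ha⟩ := by
    intro m
    rw [hHhat]
    simp only [Set.mem_setOf_eq]
    constructor
    · rintro ⟨hm, hne⟩
      refine ⟨hm, ?_⟩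
      by_contra hle
      push_neg at hle
      set i : Fin a₁ := ⟨m % a₁, Nat.mod_lt _ ha⟩ with hi
      have h1 : e i % a₁ = m % a₁ := hemod i
      have h2 : a₁ ∣ m - e i := (Nat.modEq_iff_dvd' hle).mp (by
        unfold Nat.ModEq; omega)
      obtain ⟨k, hk⟩ := h2
      exact hne ⟨i, k, by omega⟩
    · rintro ⟨hm, hlt⟩
      refine ⟨hm, ?_⟩
      rintro ⟨i, k, rfl⟩
      have h1 : (e i + a₁ * k) % a₁ = i.val := by
        rw [Nat.add_mul_mod_self_left, hemod i]
      rw [show (⟨(e i + a₁ * k) % a₁, Nat.mod_lt _ ha⟩ : Fin a₁) = i from Fin.ext h1] at hlt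
      omega
  -- structure of H within a residue class
  have hBmem : ∀ (i : Fin a₁) (m : ℕ), (m ∈ H ∧ m % a₁ = i.val) ↔ ∃ k, m = b i + a₁ * k := by
    intro i m
    constructor
    · rintro ⟨hm, hmod⟩
      have hle : b i ≤ m := (hb i).2 ⟨hm, hmod⟩
      have h1 : b i % a₁ = m % a₁ := by rw [hmod, (hb i).1.2]
      obtain ⟨k, hk⟩ := (Nat.modEq_iff_dvd' hle).mp h1
      exact ⟨k, by omega⟩
    · rintro ⟨k, rfl⟩
      constructor
      · exact H.add_mem (hb i).1.1 (by
          simpa [smul_eq_mul, mul_comm] using H.nsmul_mem haH k)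
      · rw [Nat.add_mul_mod_self_left, (hb i).1.2]
  -- main characterization of the set
  have hmain : ∀ j : ℕ, (j ∈ H ∧ j + s ∈ Hhat) ↔
      ∃ i : Fin a₁, ∃ k, k < c i ∧ j = b i + a₁ * k := by
    intro j
    constructor
    · rintro ⟨hj, hjs⟩
      refine ⟨⟨j % a₁, Nat.mod_lt _ ha⟩, ?_⟩
      set i : Fin a₁ := ⟨j % a₁, Nat.mod_lt _ ha⟩ with hi
      obtain ⟨k, hk⟩ := (hBmem i j).mp ⟨hj, rfl⟩
      refine ⟨k, ?_, hk⟩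
      obtain ⟨-, hlt⟩ := (hA (j + s)).mp hjs
      have hfin : (⟨(j + s) % a₁, Nat.mod_lt _ ha⟩ : Fin a₁) = i' i := by
        apply Fin.ext
        show (j + s) % a₁ = (i.val + s) % a₁
        conv_rhs => rw [show i.val = j % a₁ from rfl, Nat.mod_add_mod]
      rw [hfin] at hlt
      have hlt' : (b i + s) + a₁ * k < e (i' i) := by
        rw [hk] at hlt; omega
      exact ((haux i).1 k).mp hlt'
    · rintro ⟨i, k, hki, rfl⟩
      have hjH : b i + a₁ * k ∈ H := ((hBmem i _).mpr ⟨k, rfl⟩).1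
      refine ⟨hjH, ?_⟩
      rw [hA]
      refine ⟨H.add_mem hjH hs, ?_⟩
      have hfin : (⟨(b i + a₁ * k + s) % a₁, Nat.mod_lt _ ha⟩ : Fin a₁) = i' i := by
        apply Fin.ext
        show (b i + a₁ * k + s) % a₁ = (i.val + s) % a₁
        rw [show b i + a₁ * k + s = b i + s + a₁ * k by omega,
          Nat.add_mul_mod_self_left]
        conv_lhs => rw [← Nat.mod_add_mod, (hb i).1.2]
      rw [hfin]
      have := ((haux i).1 k).mpr hki
      omega
  -- the set as a finset
  set T : Finset ℕ :=
    Finset.univ.biUnion (fun i : Fin a₁ => (Finset.range (c i)).image (fun k => b i + a₁ * k))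
    with hT
  have hST : {j | j ∈ H ∧ j + s ∈ Hhat} = ↑T := by
    ext j
    simp only [Set.mem_setOf_eq, hT, Finset.coe_biUnion, Finset.mem_coe,
      Finset.mem_biUnion, Finset.mem_univ, Finset.mem_image, Finset.mem_range, true_and,
      Set.mem_iUnion]
    rw [hmain j]
    constructor
    · rintro ⟨i, k, hki, rfl⟩; exact ⟨i, trivial, k, hki, rfl⟩
    · rintro ⟨i, -, k, hki, rfl⟩; exact ⟨i, k, hki, rfl⟩
  have hmodim : ∀ (i : Fin a₁) (k : ℕ), (b i + a₁ * k) % a₁ = i.val := by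
    intro i k; rw [Nat.add_mul_mod_self_left, (hb i).1.2]
  have hcard : T.card = ∑ i : Fin a₁, c i := by
    rw [hT, Finset.card_biUnion]
    · refine Finset.sum_congr rfl fun i _ => ?_
      rw [Finset.card_image_of_injective _ (fun k₁ k₂ h => by
        have : a₁ * k₁ = a₁ * k₂ := by omega
        exact Nat.eq_of_mul_eq_mul_left ha this), Finset.card_range]
    · intro i _ j _ hij
      rw [Function.onFun, Finset.disjoint_left]
      rintro x hx hx'
      simp only [Finset.mem_image, Finset.mem_range] at hx hx'
      obtain ⟨k₁, -, rfl⟩ := hx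
      obtain ⟨k₂, -, hk₂⟩ := hx'
      apply hij
      apply Fin.ext
      rw [← hmodim i k₁, ← hmodim j k₂, hk₂]
  constructor
  · rw [hST]; exact T.finite_toSet
  · rw [hST, Set.ncard_coe_finset, hcard]
    push_cast
    rw [Finset.mul_sum]
    refine Finset.sum_congr rfl fun i _ => ?_
    have h2 := (haux i).2
    push_cast at h2
    rw [show ((e (i' i) : ℤ)) - ((b i : ℤ) + (s : ℤ)) = (e (i' i) : ℤ) - (b i : ℤ) - (s : ℤ) by ring] at h2
    exact h2
end

section
/- For every s ∈ H and every i with 0 ≤ i < a₁, writing i' = (i + s) mod a₁, the set T_i = {j ∈ H : j ≡ i (mod a₁) and j + s ∈ Ĥ} is finite and, computing in ℤ, a₁ · |T_i| = max(e(i') − b(i) − s, 0). -/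
/-- For every `s ∈ H` and every `i` with `0 ≤ i < a₁`, writing `i' = (i + s) mod a₁`,
the set `T_i = {j ∈ H : j ≡ i (mod a₁), j + s ∈ Ĥ}` is finite and, in `ℤ`,
`a₁ · |T_i| = max(e(i') − b(i) − s, 0)`. -/
theorem card_Ti
    (a₁ : ℕ) (ha : 0 < a₁) (H : AddSubmonoid ℕ) (haH : a₁ ∈ H)
    (b : Fin a₁ → ℕ)
    (hb : ∀ i : Fin a₁, IsLeast {m | m ∈ H ∧ m % a₁ = i.val} (b i))
    (e : Fin a₁ → ℕ)
    (heH : ∀ i : Fin a₁, e i ∈ H) (hemod : ∀ i : Fin a₁, e i % a₁ = i.val)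
    (Hhat : Set ℕ)
    (hHhat : Hhat = {m | m ∈ H ∧ ¬ ∃ (i : Fin a₁) (k : ℕ), m = e i + a₁ * k})
    (s : ℕ) (hs : s ∈ H) (i : Fin a₁) :
    {j | j ∈ H ∧ j % a₁ = i.val ∧ j + s ∈ Hhat}.Finite ∧
    (a₁ : ℤ) * ({j | j ∈ H ∧ j % a₁ = i.val ∧ j + s ∈ Hhat}.ncard : ℤ) =
      max ((e ⟨(i.val + s) % a₁, Nat.mod_lt _ ha⟩ : ℤ) - (b i : ℤ) - (s : ℤ)) 0 := by
  subst hHhat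
  set i' : Fin a₁ := ⟨(i.val + s) % a₁, Nat.mod_lt _ ha⟩ with hi'def
  set E := e i' with hEdef
  set B := b i with hBdef
  have hBH : B ∈ H := (hb i).1.1
  have hBmod : B % a₁ = i.val := (hb i).1.2
  have hEH : E ∈ H := heH i'
  have hEmod : E % a₁ = (i.val + s) % a₁ := hemod i'
  have hmodeq : ∀ x : ℕ, x % a₁ = i.val → (x + s) % a₁ = E % a₁ := by
    intro x hx
    have h1 : x ≡ i.val [MOD a₁] := by
      rw [Nat.ModEq, hx, Nat.mod_eq_of_lt i.isLt]
    have h2 : (x + s) % a₁ = (i.val + s) % a₁ := h1.add_right s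
    rw [h2, hEmod]
  have hcong : (B + s) % a₁ = E % a₁ := hmodeq B hBmod
  have hdvd : a₁ ∣ E - (B + s) := by
    rcases le_or_gt (B + s) E with h | h
    · exact (Nat.modEq_iff_dvd' h).1 hcong
    · simp [Nat.sub_eq_zero_of_le h.le]
  set N := (E - (B + s)) / a₁ with hNdef
  have hN : a₁ * N = E - (B + s) := Nat.mul_div_cancel' hdvd
  have hinj : Function.Injective (fun k : ℕ => B + a₁ * k) := by
    intro k₁ k₂ h
    simp only [add_right_inj] at h
    exact Nat.eq_of_mul_eq_mul_left ha h
  have hset : {j | j ∈ H ∧ j % a₁ = i.val ∧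
        j + s ∈ {m | m ∈ H ∧ ¬ ∃ (t : Fin a₁) (k : ℕ), m = e t + a₁ * k}}
      = (fun k : ℕ => B + a₁ * k) '' Set.Iio N := by
    ext j
    simp only [Set.mem_setOf_eq, Set.mem_image, Set.mem_Iio]
    constructor
    · rintro ⟨hjH, hjmod, hjsH, hjsnot⟩
      have hjB : B ≤ j := (hb i).2 ⟨hjH, hjmod⟩
      have hjd : a₁ ∣ j - B := by
        refine (Nat.modEq_iff_dvd' hjB).1 ?_
        show B % a₁ = j % a₁
        rw [hBmod, hjmod]
      obtain ⟨k, hk⟩ := hjd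
      have hjk : j = B + a₁ * k := by
        rw [← hk]; omega
      have hlt : j + s < E := by
        by_contra hle
        push_neg at hle
        have hmod2 : E % a₁ = (j + s) % a₁ := (hmodeq j hjmod).symm
        have : a₁ ∣ (j + s) - E := (Nat.modEq_iff_dvd' hle).1 hmod2
        obtain ⟨m, hm⟩ := this
        exact hjsnot ⟨i', m, by omega⟩
      refine ⟨k, ?_, hjk.symm⟩
      have h1 : a₁ * k < a₁ * N := by
        rw [hN, hjk] at *
        set x := a₁ * k with hx
        omega
      exact Nat.lt_of_mul_lt_mul_left h1
    · rintro ⟨k, hk, rfl⟩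
      have hmulH : a₁ * k ∈ H := by
        have := AddSubmonoid.nsmul_mem H haH k
        simpa [smul_eq_mul, mul_comm] using this
      have hjH : B + a₁ * k ∈ H := H.add_mem hBH hmulH
      have hlt : B + a₁ * k + s < E := by
        have h1 : a₁ * k < a₁ * N := mul_lt_mul_of_pos_left hk ha
        rw [hN] at h1
        set x := a₁ * k with hx
        omega
      refine ⟨hjH, ?_, H.add_mem hjH hs, ?_⟩
      · rw [Nat.add_mul_mod_self_left, hBmod]
      · rintro ⟨t, m, hm⟩
        have ht1 : (B + a₁ * k + s) % a₁ = t.val := by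
          rw [hm, Nat.add_mul_mod_self_left, hemod]
        have hbk : (B + a₁ * k) % a₁ = i.val := by
          rw [Nat.add_mul_mod_self_left, hBmod]
        have ht2 : (B + a₁ * k + s) % a₁ = i'.val := by
          show _ = (i.val + s) % a₁
          rw [hmodeq (B + a₁ * k) hbk, hEmod]
        have hti : t = i' := Fin.ext (by rw [← ht1, ht2])
        rw [hti] at hm
        have : E ≤ B + a₁ * k + s := by rw [hm]; exact Nat.le_add_right _ _
        omega
  have hfin : ((fun k : ℕ => B + a₁ * k) '' Set.Iio N).Finite :=
    (Set.finite_Iio N).image _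
  have hcard : {j | j ∈ H ∧ j % a₁ = i.val ∧
        j + s ∈ {m | m ∈ H ∧ ¬ ∃ (t : Fin a₁) (k : ℕ), m = e t + a₁ * k}}.ncard = N := by
    rw [hset, Set.ncard_image_of_injective _ hinj, ← Finset.coe_range,
      Set.ncard_coe_finset, Finset.card_range]
  rw [hset]
  constructor
  · exact hfin
  · rw [← hset, hcard]
    rcases le_or_gt (B + s) E with h | h
    · have h2 : ((a₁ * N : ℕ) : ℤ) = ((E - (B + s) : ℕ) : ℤ) := by rw [hN]
      push_cast [h] at h2
      have h3 : (0 : ℤ) ≤ (E : ℤ) - B - s := by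
        have : ((B + s : ℕ) : ℤ) ≤ (E : ℤ) := by exact_mod_cast h
        push_cast at this; linarith
      rw [max_eq_left h3]
      linarith
    · have hN0 : N = 0 := by
        have h0 : E - (B + s) = 0 := Nat.sub_eq_zero_of_le h.le
        rw [h0] at hN
        rcases Nat.mul_eq_zero.1 hN with h' | h'
        · omega
        · exact h'
      have h3 : (E : ℤ) - B - s ≤ 0 := by
        have : (E : ℤ) ≤ ((B + s : ℕ) : ℤ) := by exact_mod_cast h.le
        push_cast at this; linarith
      rw [hN0, max_eq_right h3]
      simp
end

section
/- For every s ∈ H and every i with 0 ≤ i < a₁, writing i' = (i + s) mod a₁, one has the set equality {j ∈ H : j ≡ i (mod a₁) and j + s ∈ Ĥ} = {b(i) + a₁·m : m ∈ ℕ and b(i) + a₁·m + s < e(i')}. -/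
/-- For every `s ∈ H` and every `i` with `0 ≤ i < a₁`, writing `i' = (i + s) mod a₁`,
one has `{j ∈ H : j ≡ i (mod a₁), j + s ∈ Ĥ} = {b(i) + a₁·m : m ∈ ℕ, b(i) + a₁·m + s < e(i')}`. -/
theorem Ti_eq
    (a₁ : ℕ) (ha : 0 < a₁) (H : AddSubmonoid ℕ) (haH : a₁ ∈ H)
    (b : Fin a₁ → ℕ)
    (hb : ∀ i : Fin a₁, IsLeast {m | m ∈ H ∧ m % a₁ = i.val} (b i))
    (e : Fin a₁ → ℕ)
    (heH : ∀ i : Fin a₁, e i ∈ H) (hemod : ∀ i : Fin a₁, e i % a₁ = i.val)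
    (Hhat : Set ℕ)
    (hHhat : Hhat = {m | m ∈ H ∧ ¬ ∃ (i : Fin a₁) (k : ℕ), m = e i + a₁ * k})
    (s : ℕ) (hs : s ∈ H) (i : Fin a₁) :
    {j | j ∈ H ∧ j % a₁ = i.val ∧ j + s ∈ Hhat} =
      {j | ∃ m : ℕ, j = b i + a₁ * m ∧
        b i + a₁ * m + s < e ⟨(i.val + s) % a₁, Nat.mod_lt _ ha⟩} := by
  have hmulH : ∀ m : ℕ, a₁ * m ∈ H := fun m => by
    simpa [mul_comm] using AddSubmonoid.nsmul_mem H haH m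
  set i' : Fin a₁ := ⟨(i.val + s) % a₁, Nat.mod_lt _ ha⟩ with hi'
  ext j
  subst hHhat
  simp only [Set.mem_setOf_eq]
  constructor
  · rintro ⟨hjH, hjmod, hjsH, hnot⟩
    have hle : b i ≤ j := (hb i).2 ⟨hjH, hjmod⟩
    have hmodeq : b i % a₁ = j % a₁ := by rw [(hb i).1.2, hjmod]
    have hdvd : a₁ ∣ j - b i := (Nat.modEq_iff_dvd' hle).mp hmodeq
    obtain ⟨m, hm⟩ := hdvd
    have hj : j = b i + a₁ * m := by omega
    refine ⟨m, hj, ?_⟩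
    rw [← hj]
    by_contra hge
    push_neg at hge
    apply hnot
    have h1 : (j + s) % a₁ = i'.val := by
      simp [Nat.add_mod, hjmod, hi']
    have h2 : e i' % a₁ = i'.val := hemod i'
    have hdvd2 : a₁ ∣ j + s - e i' :=
      (Nat.modEq_iff_dvd' hge).mp (by rw [Nat.ModEq, h1, h2])
    obtain ⟨k, hk⟩ := hdvd2
    exact ⟨i', k, by omega⟩
  · rintro ⟨m, hj, hlt⟩
    have hbH := (hb i).1.1
    have hjH : j ∈ H := by rw [hj]; exact H.add_mem hbH (hmulH m)
    have hjmod : j % a₁ = i.val := by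
      rw [hj, Nat.add_mul_mod_self_left, (hb i).1.2]
    refine ⟨hjH, hjmod, H.add_mem hjH hs, ?_⟩
    rintro ⟨k, t, hkt⟩
    have h1 : (j + s) % a₁ = i'.val := by
      simp [Nat.add_mod, hjmod, hi']
    have h2 : (j + s) % a₁ = k.val := by
      rw [hkt, Nat.add_mul_mod_self_left, hemod k]
    have hki : k = i' := Fin.ext (by rw [← h2, h1])
    rw [hki] at hkt
    omega
end

section
/- For every i with 0 ≤ i < a₁ one has b(i) ≤ e(i), a₁ divides e(i) − b(i), and the set equality {m ∈ Ĥ : m ≡ i (mod a₁)} = {b(i) + a₁·k : k ∈ ℕ and b(i) + a₁·k < e(i)}. -/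
/-- For every `i` with `0 ≤ i < a₁`: `b(i) ≤ e(i)`, `a₁ ∣ e(i) − b(i)`, and
`{m ∈ Ĥ : m ≡ i (mod a₁)} = {b(i) + a₁·k : k ∈ ℕ, b(i) + a₁·k < e(i)}`. -/
theorem Hhat_residue_classes
    (a₁ : ℕ) (ha : 0 < a₁) (H : AddSubmonoid ℕ) (haH : a₁ ∈ H)
    (b : Fin a₁ → ℕ)
    (hb : ∀ i : Fin a₁, IsLeast {m | m ∈ H ∧ m % a₁ = i.val} (b i))
    (e : Fin a₁ → ℕ)
    (heH : ∀ i : Fin a₁, e i ∈ H) (hemod : ∀ i : Fin a₁, e i % a₁ = i.val)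
    (Hhat : Set ℕ)
    (hHhat : Hhat = {m | m ∈ H ∧ ¬ ∃ (i : Fin a₁) (k : ℕ), m = e i + a₁ * k})
    (i : Fin a₁) :
    b i ≤ e i ∧ (a₁ : ℤ) ∣ ((e i : ℤ) - (b i : ℤ)) ∧
    {m | m ∈ Hhat ∧ m % a₁ = i.val} =
      {m | ∃ k : ℕ, m = b i + a₁ * k ∧ b i + a₁ * k < e i} := by
  obtain ⟨⟨hbH, hbmod⟩, hbmin⟩ := hb i
  have hble : b i ≤ e i := hbmin ⟨heH i, hemod i⟩
  have hmodeq : b i ≡ e i [MOD a₁] := by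
    unfold Nat.ModEq; rw [hbmod, hemod]
  refine ⟨hble, ?_, ?_⟩
  · exact_mod_cast (Nat.modEq_iff_dvd (n := a₁)).mp hmodeq
  · ext m
    simp only [Set.mem_setOf_eq, hHhat]
    constructor
    · rintro ⟨⟨hmH, hnot⟩, hmmod⟩
      have hbm : b i ≤ m := hbmin ⟨hmH, hmmod⟩
      have : a₁ ∣ m - b i := (Nat.modEq_iff_dvd' hbm).mp (by
        unfold Nat.ModEq; rw [hbmod, hmmod])
      obtain ⟨k, hk⟩ := this
      have hm : m = b i + a₁ * k := by omega
      refine ⟨k, hm, ?_⟩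
      rw [← hm]
      by_contra hge
      push_neg at hge
      have : a₁ ∣ m - e i := (Nat.modEq_iff_dvd' hge).mp (by
        unfold Nat.ModEq; rw [hemod, hmmod])
      obtain ⟨k', hk'⟩ := this
      exact hnot ⟨i, k', by omega⟩
    · rintro ⟨k, rfl, hlt⟩
      have hmH : b i + a₁ * k ∈ H := H.add_mem hbH (by
        simpa [mul_comm, smul_eq_mul] using H.nsmul_mem haH k)
      have hmmod : (b i + a₁ * k) % a₁ = i.val := by
        rw [Nat.add_mul_mod_self_left, hbmod]
      refine ⟨⟨hmH, ?_⟩, hmmod⟩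
      rintro ⟨j, k', hj⟩
      have : j.val = i.val := by
        rw [← hemod j, ← hmmod, hj, Nat.add_mul_mod_self_left]
      have : j = i := Fin.ext this
      subst this
      omega
end

section
/- The set Ĥ is finite and a₁ · |Ĥ| = Σ_{0≤i<a₁} (e(i) − b(i)). (In the coding-theoretic setting this says that Ĥ(Q) = {u ∈ H(Q) : C_u ≠ C_{u−1}} has exactly n elements, n being the code length, since Σ_i(−v_Q(η_i) + v_Q(y_i)) = a₁·n.) -/
/-- `Ĥ` is finite, and `a₁ · |Ĥ| = Σ_{0 ≤ i < a₁} (e(i) − b(i))` in `ℤ`. -/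
theorem Hhat_card
    (a₁ : ℕ) (ha : 0 < a₁) (H : AddSubmonoid ℕ) (haH : a₁ ∈ H)
    (b : Fin a₁ → ℕ)
    (hb : ∀ i : Fin a₁, IsLeast {m | m ∈ H ∧ m % a₁ = i.val} (b i))
    (e : Fin a₁ → ℕ)
    (heH : ∀ i : Fin a₁, e i ∈ H) (hemod : ∀ i : Fin a₁, e i % a₁ = i.val)
    (Hhat : Set ℕ)
    (hHhat : Hhat = {m | m ∈ H ∧ ¬ ∃ (i : Fin a₁) (k : ℕ), m = e i + a₁ * k}) :
    Hhat.Finite ∧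
    (a₁ : ℤ) * (Hhat.ncard : ℤ) = ∑ i : Fin a₁, ((e i : ℤ) - (b i : ℤ)) := by
  -- d i : number of elements of Ĥ in residue class i
  set d : Fin a₁ → ℕ := fun i => (e i - b i) / a₁ with hd
  have hbe : ∀ i : Fin a₁, b i ≤ e i := fun i =>
    (hb i).2 ⟨heH i, hemod i⟩
  have hbmod : ∀ i : Fin a₁, b i % a₁ = i.val := fun i => (hb i).1.2
  have hbH : ∀ i : Fin a₁, b i ∈ H := fun i => (hb i).1.1
  have hdvd : ∀ i : Fin a₁, a₁ ∣ e i - b i := by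
    intro i
    have : b i ≡ e i [MOD a₁] := by
      unfold Nat.ModEq
      rw [hbmod i, hemod i]
    exact (Nat.modEq_iff_dvd' (hbe i)).1 this
  have hkey : ∀ i : Fin a₁, e i = b i + a₁ * d i := by
    intro i
    have h1 := Nat.mul_div_cancel' (hdvd i)
    have h2 := hbe i
    simp only [hd]
    omega
  -- the finset realizing Ĥ
  set S : Finset ℕ :=
    Finset.univ.biUnion (fun i : Fin a₁ =>
      (Finset.range (d i)).image (fun k => b i + a₁ * k)) with hS
  have hmem : ∀ m, m ∈ Hhat ↔ m ∈ S := by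
    intro m
    rw [hHhat, hS]
    simp only [Set.mem_setOf_eq, Finset.mem_biUnion, Finset.mem_univ, true_and,
      Finset.mem_image, Finset.mem_range]
    constructor
    · rintro ⟨hmH, hnot⟩
      set i : Fin a₁ := ⟨m % a₁, Nat.mod_lt m ha⟩ with hi
      have hbm : b i ≤ m := (hb i).2 ⟨hmH, rfl⟩
      have hmod : m % a₁ = b i % a₁ := by rw [hbmod i]
      have hdvd2 : a₁ ∣ m - b i := (Nat.modEq_iff_dvd' hbm).1 hmod.symm
      obtain ⟨k, hk⟩ := hdvd2
      have hmk : m = b i + a₁ * k := by omega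
      refine ⟨i, k, ?_, hmk.symm⟩
      by_contra hkd
      push_neg at hkd
      refine hnot ⟨i, k - d i, ?_⟩
      have h := hkey i
      have h2 : a₁ * k = a₁ * d i + a₁ * (k - d i) := by
        rw [← Nat.mul_add]; congr 1; omega
      omega
    · rintro ⟨i, k, hkd, rfl⟩
      refine ⟨H.add_mem (hbH i) ?_, ?_⟩
      · have : a₁ * k = k • a₁ := by rw [smul_eq_mul]; ring
        rw [this]; exact AddSubmonoid.nsmul_mem H haH k
      · rintro ⟨j, k', hjk⟩
        have hmod1 : (b i + a₁ * k) % a₁ = i.val := by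
          rw [Nat.add_mul_mod_self_left, hbmod i]
        have hmod2 : (e j + a₁ * k') % a₁ = j.val := by
          rw [Nat.add_mul_mod_self_left, hemod j]
        have hij : i = j := by
          apply Fin.ext
          rw [← hmod1, ← hmod2, hjk]
        subst hij
        rw [hkey i] at hjk
        have : k = d i + k' := by
          have ha' : 0 < a₁ := ha
          nlinarith
        omega
  have hset : Hhat = ↑S := Set.ext fun m => by rw [hmem]; simp
  constructor
  · rw [hset]; exact S.finite_toSet
  · rw [hset, Set.ncard_coe_finset]
    have hcard : S.card = ∑ i : Fin a₁, d i := by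
      rw [hS, Finset.card_biUnion]
      · apply Finset.sum_congr rfl
        intro i _
        rw [Finset.card_image_of_injective _ (fun x y h => Nat.eq_of_mul_eq_mul_left ha (Nat.add_left_cancel h))]
        exact Finset.card_range _
      · intro i _ j _ hij
        rw [Function.onFun, Finset.disjoint_left]
        rintro x hx hy
        simp only [Finset.mem_image, Finset.mem_range] at hx hy
        obtain ⟨k, _, rfl⟩ := hx
        obtain ⟨k', _, he'⟩ := hy
        apply hij
        apply Fin.ext
        rw [← hbmod i, ← hbmod j]
        have : (b i + a₁ * k) % a₁ = (b j + a₁ * k') % a₁ := by rw [he']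
        simpa [Nat.add_mul_mod_self_left] using this
    rw [hcard]
    push_cast
    rw [Finset.mul_sum]
    apply Finset.sum_congr rfl
    intro i _
    have := hkey i
    have := hbe i
    omega
end

section
/- For every nonempty finite subset Γ ⊆ H, min_{s∈Γ} a₁·|{j ∈ H : j + s ∈ Ĥ}| = min_{s∈Γ} Σ_{0≤i<a₁} max(e((i+s) mod a₁) − b(i) − s, 0) (computed in ℤ); that is, the Andersen–Geil bound d_AG(C_Γ) = min_{s∈Γ} λ(s) coincides with the bound d_LBAO(C_Γ) = min_{s∈Γ} ν(s) of Lee, Bras-Amorós and O'Sullivan. -/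
/-- For every nonempty finite subset `Γ ⊆ H`,
`min_{s∈Γ} a₁·λ(s) = min_{s∈Γ} Σ_{0≤i<a₁} max(e((i+s) mod a₁) − b(i) − s, 0)`,
i.e. the Andersen–Geil bound `d_AG(C_Γ)` coincides with `d_LBAO(C_Γ)`. -/
theorem dAG_eq_dLBAO
    (a₁ : ℕ) (ha : 0 < a₁) (H : AddSubmonoid ℕ) (haH : a₁ ∈ H)
    (b : Fin a₁ → ℕ)
    (hb : ∀ i : Fin a₁, IsLeast {m | m ∈ H ∧ m % a₁ = i.val} (b i))
    (e : Fin a₁ → ℕ)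
    (heH : ∀ i : Fin a₁, e i ∈ H) (hemod : ∀ i : Fin a₁, e i % a₁ = i.val)
    (Hhat : Set ℕ)
    (hHhat : Hhat = {m | m ∈ H ∧ ¬ ∃ (i : Fin a₁) (k : ℕ), m = e i + a₁ * k})
    (Γ : Finset ℕ) (hΓne : Γ.Nonempty) (hΓH : ∀ s ∈ Γ, s ∈ H) :
    Γ.inf' hΓne (fun s => (a₁ : ℤ) * ({j | j ∈ H ∧ j + s ∈ Hhat}.ncard : ℤ)) =
    Γ.inf' hΓne (fun s => ∑ i : Fin a₁,
      max ((e ⟨(i.val + s) % a₁, Nat.mod_lt _ ha⟩ : ℤ) - (b i : ℤ) - (s : ℤ)) 0) := by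
  have hbH : ∀ i, b i ∈ H := fun i => (hb i).1.1
  have hbmod : ∀ i, b i % a₁ = i.val := fun i => (hb i).1.2
  have hmulH : ∀ k, a₁ * k ∈ H := by
    intro k
    have := AddSubmonoid.nsmul_mem H haH k
    simpa [nsmul_eq_mul, mul_comm] using this
  -- membership in H in terms of b
  have hmemH : ∀ m : ℕ, m ∈ H ↔ b ⟨m % a₁, Nat.mod_lt _ ha⟩ ≤ m := by
    intro m
    constructor
    · intro hm
      exact (hb ⟨m % a₁, Nat.mod_lt _ ha⟩).2 ⟨hm, rfl⟩
    · intro hle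
      set i : Fin a₁ := ⟨m % a₁, Nat.mod_lt _ ha⟩
      have hmod : b i % a₁ = m % a₁ := hbmod i
      have hdvd : a₁ ∣ m - b i := (Nat.modEq_iff_dvd' hle).mp hmod
      obtain ⟨k, hk⟩ := hdvd
      have : m = b i + a₁ * k := by omega
      rw [this]
      exact add_mem (hbH i) (hmulH k)
  -- membership in Hhat for elements of H
  have hmemHhat : ∀ m : ℕ, m ∈ H → (m ∈ Hhat ↔ m < e ⟨m % a₁, Nat.mod_lt _ ha⟩) := by
    intro m hm
    rw [hHhat]
    set i : Fin a₁ := ⟨m % a₁, Nat.mod_lt _ ha⟩ with hi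
    constructor
    · intro hmem
      obtain ⟨-, hne⟩ := hmem
      by_contra hlt
      push_neg at hlt
      have hmod : e i % a₁ = m % a₁ := hemod i
      have hdvd : a₁ ∣ m - e i := (Nat.modEq_iff_dvd' hlt).mp hmod
      obtain ⟨k, hk⟩ := hdvd
      exact hne ⟨i, k, by omega⟩
    · intro hlt
      refine ⟨hm, ?_⟩
      rintro ⟨i', k, hk⟩
      have h1 : m % a₁ = i'.val := by
        rw [hk, Nat.add_mul_mod_self_left, hemod i']
      have h2 : i' = i := Fin.ext (by rw [← h1])
      rw [h2] at hk
      omega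
  refine Finset.inf'_congr hΓne rfl ?_
  intro s hsΓ
  have hs := hΓH s hsΓ
  set r : Fin a₁ → Fin a₁ := fun i => ⟨(i.val + s) % a₁, Nat.mod_lt _ ha⟩ with hr
  set c : Fin a₁ → ℕ := fun i => (e (r i) - (b i + s)) / a₁ with hc
  have hdvdD : ∀ i : Fin a₁, b i + s ≤ e (r i) → a₁ ∣ e (r i) - (b i + s) := by
    intro i hle
    apply (Nat.modEq_iff_dvd' hle).mp
    show (b i + s) % a₁ = e (r i) % a₁
    rw [hemod (r i)]
    show (b i + s) % a₁ = (i.val + s) % a₁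
    rw [Nat.add_mod, hbmod i, Nat.add_mod_mod]
  set F : Finset ℕ := Finset.univ.biUnion
    (fun i : Fin a₁ => (Finset.range (c i)).image (fun k => b i + a₁ * k)) with hF
  have hclassmod : ∀ (i : Fin a₁) (k : ℕ), (b i + a₁ * k) % a₁ = i.val := by
    intro i k
    rw [Nat.add_mul_mod_self_left, hbmod i]
  have hset : {j | j ∈ H ∧ j + s ∈ Hhat} = ↑F := by
    ext j
    simp only [Set.mem_setOf_eq, hF, Finset.coe_biUnion, Finset.mem_coe,
      Finset.mem_biUnion, Finset.mem_univ, Set.mem_iUnion, Finset.mem_image,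
      Finset.mem_range, true_and, exists_prop, Set.iUnion_true]
    constructor
    · rintro ⟨hjH, hjs⟩
      set i : Fin a₁ := ⟨j % a₁, Nat.mod_lt _ ha⟩ with hi
      have hble : b i ≤ j := (hmemH j).mp hjH
      have hdvd : a₁ ∣ j - b i := (Nat.modEq_iff_dvd' hble).mp (hbmod i)
      obtain ⟨k, hk⟩ := hdvd
      have hjk : j = b i + a₁ * k := by omega
      have hjsH : j + s ∈ H := add_mem hjH hs
      have hclass : (j + s) % a₁ = (i.val + s) % a₁ := by
        show (j + s) % a₁ = (j % a₁ + s) % a₁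
        conv_rhs => rw [Nat.add_mod, Nat.mod_mod_of_dvd j dvd_rfl, ← Nat.add_mod]
      have hlt : j + s < e (r i) := by
        have := (hmemHhat (j + s) hjsH).mp hjs
        have hre : (⟨(j + s) % a₁, Nat.mod_lt _ ha⟩ : Fin a₁) = r i := Fin.ext hclass
        rwa [hre] at this
      refine ⟨i, k, ?_, hjk.symm⟩
      -- k < c i
      have hle : b i + s ≤ e (r i) := by omega
      obtain ⟨d, hd⟩ := hdvdD i hle
      have hcd : c i = d := by
        rw [hc]
        simp only [hd]
        exact Nat.mul_div_cancel_left d ha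
      rw [hcd]
      have : a₁ * k < a₁ * d := by omega
      exact Nat.lt_of_mul_lt_mul_left this
    · rintro ⟨i, k, hklt, hjk⟩
      have hjH : j ∈ H := by rw [← hjk]; exact add_mem (hbH i) (hmulH k)
      refine ⟨hjH, ?_⟩
      have hjsH : j + s ∈ H := add_mem hjH hs
      rw [hmemHhat (j + s) hjsH]
      have hclass : (j + s) % a₁ = (i.val + s) % a₁ := by
        rw [← hjk]
        show (b i + a₁ * k + s) % a₁ = (i.val + s) % a₁
        rw [Nat.add_mod, hclassmod i k, Nat.add_mod_mod]
      have hre : (⟨(j + s) % a₁, Nat.mod_lt _ ha⟩ : Fin a₁) = r i := Fin.ext hclass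
      rw [hre]
      -- j + s < e (r i)
      have hcpos : 0 < c i := Nat.pos_of_ne_zero (by rintro h; rw [h] at hklt; omega)
      have hle : b i + s ≤ e (r i) := by
        by_contra hx
        push_neg at hx
        have : e (r i) - (b i + s) = 0 := by omega
        rw [hc] at hcpos
        simp only [this] at hcpos
        simp at hcpos
      obtain ⟨d, hd⟩ := hdvdD i hle
      have hcd : c i = d := by
        rw [hc]; simp only [hd]; exact Nat.mul_div_cancel_left d ha
      rw [hcd] at hklt
      have : a₁ * k < a₁ * d := (Nat.mul_lt_mul_left ha).mpr hklt
      omega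
  rw [hset, Set.ncard_coe_finset]
  have hcard : F.card = ∑ i : Fin a₁, c i := by
    rw [hF]
    rw [Finset.card_biUnion]
    · refine Finset.sum_congr rfl fun i _ => ?_
      rw [Finset.card_image_of_injective]
      · exact Finset.card_range _
      · intro k k' hkk'
        simp only [add_right_inj] at hkk'
        exact Nat.eq_of_mul_eq_mul_left ha hkk'
    · intro i _ i' _ hne
      rw [Function.onFun, Finset.disjoint_left]
      rintro x hx hx'
      simp only [Finset.mem_image, Finset.mem_range] at hx hx'
      obtain ⟨k, -, hk⟩ := hx
      obtain ⟨k', -, hk'⟩ := hx'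
      apply hne
      apply Fin.ext
      rw [← hclassmod i k, ← hclassmod i' k', hk, hk']
  rw [hcard]
  push_cast
  rw [Finset.mul_sum]
  refine Finset.sum_congr rfl fun i _ => ?_
  show (a₁ : ℤ) * (c i : ℤ) = max ((e (r i) : ℤ) - (b i : ℤ) - (s : ℤ)) 0
  by_cases hle : b i + s ≤ e (r i)
  · obtain ⟨d, hd⟩ := hdvdD i hle
    have hcd : c i = d := by
      rw [hc]; simp only [hd]; exact Nat.mul_div_cancel_left d ha
    rw [hcd]
    have h1 : e (r i) = b i + s + a₁ * d := by omega
    rw [h1]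
    push_cast
    have h2 : ((b i : ℤ) + s + a₁ * d) - b i - s = (a₁ : ℤ) * d := by ring
    rw [h2, max_eq_left (by positivity)]
  · push_neg at hle
    have hc0 : c i = 0 := by
      rw [hc]
      have : e (r i) - (b i + s) = 0 := by omega
      simp [this]
    rw [hc0]
    rw [max_eq_right (by push_cast; omega)]
    simp
end

section
/- Assume: (i) for every i ∉ S, a₁·c̄(i) ≤ E(i) − A(i) and D(σ i) ≤ min(E(i) + s, N(σ i)); (ii) for every i ∈ S, D(σ i) − a₁·c̄(i) ≤ min(E(i) + s, N(σ i)) and A(i) ≤ E(i); (iii) Σ_{0≤i<a₁} (D(σ i) + A(i)) = Σ_{0≤i<a₁} (N(σ i) + Y(i)); (iv) Σ_{0≤i<a₁} (E(i) − Y(i)) = a₁·wt. Then a₁·Σ_{i∈S} c̄(i) ≥ a₁·Σ_{i∉S} c̄(i) − 2·a₁·wt + Σ_{0≤i<a₁} max(N(σ i) − Y(i) − s, E(i) − Y(i)). -/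
/-- Integer-arithmetic model of the voting bound (Lemma 4):
`a₁·Σ_{i∈S} c̄(i) ≥ a₁·Σ_{i∉S} c̄(i) − 2a₁·wt + Σ_i max(N(σ i) − Y(i) − s, E(i) − Y(i))`. -/
theorem voting_bound
    (a₁ : ℕ) (ha : 0 < a₁) (σ : Equiv.Perm (Fin a₁)) (s : ℤ)
    (A D E N Y cbar : Fin a₁ → ℤ) (S : Finset (Fin a₁)) (wt : ℕ)
    (hc : ∀ i, 0 ≤ cbar i)
    (h1 : ∀ i ∉ S, (a₁ : ℤ) * cbar i ≤ E i - A i ∧ D (σ i) ≤ min (E i + s) (N (σ i)))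
    (h2 : ∀ i ∈ S, D (σ i) - (a₁ : ℤ) * cbar i ≤ min (E i + s) (N (σ i)) ∧ A i ≤ E i)
    (h3 : ∑ i : Fin a₁, (D (σ i) + A i) = ∑ i : Fin a₁, (N (σ i) + Y i))
    (h4 : ∑ i : Fin a₁, (E i - Y i) = (a₁ : ℤ) * (wt : ℤ)) :
    (a₁ : ℤ) * ∑ i ∈ S, cbar i ≥
      (a₁ : ℤ) * ∑ i ∈ Sᶜ, cbar i - 2 * (a₁ : ℤ) * (wt : ℤ) +
        ∑ i : Fin a₁, max (N (σ i) - Y i - s) (E i - Y i) := by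
  have key : ∀ i : Fin a₁, max (N (σ i) - Y i - s) (E i - Y i)
      = N (σ i) + E i - Y i - min (E i + s) (N (σ i)) := by
    intro i; omega
  rw [Finset.sum_congr rfl fun i _ => key i]
  have hmin : ∑ i ∈ S, (D (σ i) - (a₁ : ℤ) * cbar i) + ∑ i ∈ Sᶜ, D (σ i)
      ≤ ∑ i : Fin a₁, min (E i + s) (N (σ i)) := by
    rw [← Finset.sum_add_sum_compl S (fun i => min (E i + s) (N (σ i)))]
    gcongr with i hi i hi
    · exact (h2 i hi).1
    · exact (h1 i (Finset.mem_compl.mp hi)).2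
  have hEA : (a₁ : ℤ) * ∑ i ∈ Sᶜ, cbar i ≤ ∑ i : Fin a₁, (E i - A i) := by
    rw [← Finset.sum_add_sum_compl S (fun i => E i - A i), Finset.mul_sum]
    have h0 : (0:ℤ) ≤ ∑ i ∈ S, (E i - A i) :=
      Finset.sum_nonneg fun i hi => by have := (h2 i hi).2; linarith
    have h1' : ∑ i ∈ Sᶜ, (a₁ : ℤ) * cbar i ≤ ∑ i ∈ Sᶜ, (E i - A i) :=
      Finset.sum_le_sum fun i hi => (h1 i (Finset.mem_compl.mp hi)).1
    linarith
  have hDfull : ∑ i : Fin a₁, D (σ i)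
      = ∑ i ∈ S, D (σ i) + ∑ i ∈ Sᶜ, D (σ i) :=
    (Finset.sum_add_sum_compl S _).symm
  simp only [Finset.sum_add_distrib, Finset.sum_sub_distrib, Finset.mul_sum] at *
  linarith
end

section
/- Assume: (i) for every i ∉ S, a₁·c̄(i) ≤ E(i) − A(i) and D(σ i) ≤ min(E(i) + s, N(σ i)); (ii) for every i ∈ S, D(σ i) − a₁·c̄(i) ≤ min(E(i) + s, N(σ i)) and A(i) ≤ E(i); (iii) Σ_{0≤i<a₁} (D(σ i) + A(i)) = Σ_{0≤i<a₁} (N(σ i) + Y(i)); (iv) Σ_{0≤i<a₁} (E(i) − Y(i)) = a₁·wt; (v) Y(i) ≤ E(i) for every i. Then a₁·Σ_{i∈S} c̄(i) ≥ a₁·Σ_{i∉S} c̄(i) − 2·a₁·wt + Σ_{0≤i<a₁} max(N(σ i) − Y(i) − s, 0); that is, the number of votes received by the candidate ω_s is at least Σ_{i∉S} c̄(i) − 2·wt(e) + ν(s) (Proposition 6). -/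
/-- Proposition 6 (lower bound for the number of votes):
`a₁·Σ_{i∈S} c̄(i) ≥ a₁·Σ_{i∉S} c̄(i) − 2a₁·wt + Σ_i max(N(σ i) − Y(i) − s, 0)`. -/
theorem votes_lower_bound
    (a₁ : ℕ) (ha : 0 < a₁) (σ : Equiv.Perm (Fin a₁)) (s : ℤ)
    (A D E N Y cbar : Fin a₁ → ℤ) (S : Finset (Fin a₁)) (wt : ℕ)
    (hc : ∀ i, 0 ≤ cbar i)
    (h1 : ∀ i ∉ S, (a₁ : ℤ) * cbar i ≤ E i - A i ∧ D (σ i) ≤ min (E i + s) (N (σ i)))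
    (h2 : ∀ i ∈ S, D (σ i) - (a₁ : ℤ) * cbar i ≤ min (E i + s) (N (σ i)) ∧ A i ≤ E i)
    (h3 : ∑ i : Fin a₁, (D (σ i) + A i) = ∑ i : Fin a₁, (N (σ i) + Y i))
    (h4 : ∑ i : Fin a₁, (E i - Y i) = (a₁ : ℤ) * (wt : ℤ))
    (h5 : ∀ i, Y i ≤ E i) :
    (a₁ : ℤ) * ∑ i ∈ S, cbar i ≥
      (a₁ : ℤ) * ∑ i ∈ Sᶜ, cbar i - 2 * (a₁ : ℤ) * (wt : ℤ) +
        ∑ i : Fin a₁, max (N (σ i) - Y i - s) 0 := by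
  have key : ∀ i, max (N (σ i) - Y i - s) 0
      ≤ E i + N (σ i) - min (E i + s) (N (σ i)) - Y i := by
    intro i; have := h5 i; omega
  have hS : ∀ i ∈ S, max (N (σ i) - Y i - s) 0
      ≤ (E i + N (σ i) - D (σ i) - Y i) + (a₁ : ℤ) * cbar i := by
    intro i hi
    have h := (h2 i hi).1
    have := key i
    omega
  have hSc : ∀ i ∈ Sᶜ, max (N (σ i) - Y i - s) 0
      ≤ E i + N (σ i) - D (σ i) - Y i := by
    intro i hi
    have h := (h1 i (Finset.mem_compl.mp hi)).2
    have := key i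
    omega
  have sum1 : ∑ i : Fin a₁, max (N (σ i) - Y i - s) 0
      ≤ ∑ i : Fin a₁, (E i + N (σ i) - D (σ i) - Y i) + (a₁ : ℤ) * ∑ i ∈ S, cbar i := by
    rw [← Finset.sum_add_sum_compl S (fun i => max (N (σ i) - Y i - s) 0),
        ← Finset.sum_add_sum_compl S (fun i => E i + N (σ i) - D (σ i) - Y i),
        Finset.mul_sum]
    have a := Finset.sum_le_sum hS
    have b := Finset.sum_le_sum hSc
    rw [Finset.sum_add_distrib] at a
    linarith
  have sum2 : (a₁ : ℤ) * ∑ i ∈ Sᶜ, cbar i ≤ ∑ i : Fin a₁, (E i - A i) := by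
    rw [← Finset.sum_add_sum_compl S (fun i => E i - A i), Finset.mul_sum]
    have a : ∀ i ∈ S, (0 : ℤ) ≤ E i - A i := fun i hi => by linarith [(h2 i hi).2]
    have b := Finset.sum_le_sum (fun i hi => (h1 i (Finset.mem_compl.mp hi)).1)
    have c := Finset.sum_le_sum a
    simp only [Finset.sum_const_zero] at c
    linarith
  have e1 : ∑ i : Fin a₁, (E i + N (σ i) - D (σ i) - Y i)
      = ∑ i : Fin a₁, (E i - Y i) + ∑ i : Fin a₁, (A i - Y i) := by
    simp only [Finset.sum_add_distrib, Finset.sum_sub_distrib] at h3 ⊢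
    linarith
  have e2 : ∑ i : Fin a₁, (A i - Y i)
      = ∑ i : Fin a₁, (E i - Y i) - ∑ i : Fin a₁, (E i - A i) := by
    simp only [Finset.sum_sub_distrib]; ring
  linarith
end

section
/- Assume: (i) for every i ∉ S, a₁·c̄(i) ≤ E(i) − A(i) and D(σ i) ≤ min(E(i) + s, N(σ i)); (ii) for every i ∈ S, D(σ i) − a₁·c̄(i) ≤ min(E(i) + s, N(σ i)) and A(i) ≤ E(i); (iii) Σ_{0≤i<a₁} (D(σ i) + A(i)) = Σ_{0≤i<a₁} (N(σ i) + Y(i)); (iv) Σ_{0≤i<a₁} (E(i) − Y(i)) = a₁·wt; (v) Y(i) ≤ E(i) for every i; and (vi) wt ≤ τ for a natural number τ. Then a₁·Σ_{i∈S} c̄(i) ≥ a₁·Σ_{i∉S} c̄(i) − 2·a₁·τ + Σ_{0≤i<a₁} max(N(σ i) − Y(i) − s, 0); that is, whenever the number of remaining errors is at most τ, the corresponding candidate ω_s passes the acceptance threshold Σ_{w=w_{s,i}} c̄_i ≥ Σ_{w≠w_{s,i}} c̄_i − 2τ + ν(s) of the algorithm, so every codeword within Hamming distance τ of the received word produces an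 accepted vote at every iteration. -/
/-- If moreover `wt ≤ τ`, then the candidate passes the acceptance threshold:
`a₁·Σ_{i∈S} c̄(i) ≥ a₁·Σ_{i∉S} c̄(i) − 2a₁·τ + Σ_i max(N(σ i) − Y(i) − s, 0)`. -/
theorem votes_pass_threshold
    (a₁ : ℕ) (ha : 0 < a₁) (σ : Equiv.Perm (Fin a₁)) (s : ℤ)
    (A D E N Y cbar : Fin a₁ → ℤ) (S : Finset (Fin a₁)) (wt τ : ℕ)
    (hc : ∀ i, 0 ≤ cbar i)
    (h1 : ∀ i ∉ S, (a₁ : ℤ) * cbar i ≤ E i - A i ∧ D (σ i) ≤ min (E i + s) (N (σ i)))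
    (h2 : ∀ i ∈ S, D (σ i) - (a₁ : ℤ) * cbar i ≤ min (E i + s) (N (σ i)) ∧ A i ≤ E i)
    (h3 : ∑ i : Fin a₁, (D (σ i) + A i) = ∑ i : Fin a₁, (N (σ i) + Y i))
    (h4 : ∑ i : Fin a₁, (E i - Y i) = (a₁ : ℤ) * (wt : ℤ))
    (h5 : ∀ i, Y i ≤ E i)
    (h6 : wt ≤ τ) :
    (a₁ : ℤ) * ∑ i ∈ S, cbar i ≥
      (a₁ : ℤ) * ∑ i ∈ Sᶜ, cbar i - 2 * (a₁ : ℤ) * (τ : ℤ) +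
        ∑ i : Fin a₁, max (N (σ i) - Y i - s) 0 := by
  have hsplit : ∀ f : Fin a₁ → ℤ, ∑ i : Fin a₁, f i = ∑ i ∈ S, f i + ∑ i ∈ Sᶜ, f i :=
    fun f => (Finset.sum_add_sum_compl S f).symm
  -- bound on S
  have hS : ∑ i ∈ S, (D (σ i) + A i) ≤
      ∑ i ∈ S, (min (E i + s) (N (σ i)) + E i + (a₁ : ℤ) * cbar i) := by
    refine Finset.sum_le_sum fun i hi => ?_
    obtain ⟨h, h'⟩ := h2 i hi
    linarith
  have hSc : ∑ i ∈ Sᶜ, (D (σ i) + A i) ≤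
      ∑ i ∈ Sᶜ, (min (E i + s) (N (σ i)) + E i - (a₁ : ℤ) * cbar i) := by
    refine Finset.sum_le_sum fun i hi => ?_
    obtain ⟨h, h'⟩ := h1 i (Finset.mem_compl.mp hi)
    linarith
  have key : ∑ i : Fin a₁, (N (σ i) + Y i) ≤
      ∑ i : Fin a₁, (min (E i + s) (N (σ i)) + E i)
        + (a₁ : ℤ) * (∑ i ∈ S, cbar i) - (a₁ : ℤ) * (∑ i ∈ Sᶜ, cbar i) := by
    rw [← h3, hsplit (fun i => D (σ i) + A i),
      hsplit (fun i => min (E i + s) (N (σ i)) + E i), Finset.mul_sum, Finset.mul_sum]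
    simp only [Finset.sum_add_distrib, Finset.sum_sub_distrib] at hS hSc ⊢
    linarith
  have hmin : ∀ i : Fin a₁, min (E i + s) (N (σ i)) = N (σ i) - max (N (σ i) - E i - s) 0 :=
    fun i => by omega
  have hmax : ∀ i : Fin a₁, max (N (σ i) - Y i - s) 0 ≤ max (N (σ i) - E i - s) 0 + (E i - Y i) :=
    fun i => by have := h5 i; omega
  have hsum1 : ∑ i : Fin a₁, max (N (σ i) - Y i - s) 0 ≤
      ∑ i : Fin a₁, max (N (σ i) - E i - s) 0 + (a₁ : ℤ) * (wt : ℤ) := by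
    calc ∑ i : Fin a₁, max (N (σ i) - Y i - s) 0
        ≤ ∑ i : Fin a₁, (max (N (σ i) - E i - s) 0 + (E i - Y i)) :=
          Finset.sum_le_sum fun i _ => hmax i
      _ = ∑ i : Fin a₁, max (N (σ i) - E i - s) 0 + (a₁ : ℤ) * (wt : ℤ) := by
          rw [Finset.sum_add_distrib, h4]
  simp only [hmin] at key
  simp only [Finset.sum_add_distrib, Finset.sum_sub_distrib] at key
  have hwt : (a₁ : ℤ) * (wt : ℤ) ≤ (a₁ : ℤ) * (τ : ℤ) := by
    have : (wt : ℤ) ≤ (τ : ℤ) := by exact_mod_cast h6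
    exact mul_le_mul_of_nonneg_left this (by positivity)
  have hEY : ∑ i : Fin a₁, Y i = ∑ i : Fin a₁, E i - (a₁ : ℤ) * (wt : ℤ) := by
    have := h4
    rw [Finset.sum_sub_distrib] at this
    linarith
  linarith
end

section
/- Let K be a field, n, τ, s natural numbers, P : Fin n → K injective, and r : Fin n → K. Suppose β₀, β₁ ∈ K[X] satisfy β₀(P i) + r(i)·β₁(P i) = 0 for every i, β₁ ≠ 0, deg β₀ ≤ deg β₁ + s, and deg β₁ + τ + s < n. If f ∈ K[X] satisfies deg f ≤ s and |{i : f(P i) ≠ r(i)}| ≤ τ, then β₀ = −f·β₁. (Genus-zero, Reed–Solomon instance of Lemma 5: an element β₁z + β₀ of the interpolation module I_r with leading term β₁z with respect to <_s and −v_Q(β₁) < n − τ − s determines the unique message polynomial within distance τ as f = −β₀/β₁.) -/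
/-- Genus-zero (Reed–Solomon) instance of Lemma 5: if `β₁z + β₀` lies in the
interpolation module `I_r`, has leading term `β₁z` w.r.t. `<_s`
(`deg β₀ ≤ deg β₁ + s`) and `deg β₁ < n − τ − s`, then any `f` with `deg f ≤ s`
within Hamming distance `τ` from `r` satisfies `β₀ = −f·β₁`. -/
theorem interpolation_determines_message
    (K : Type*) [Field K] (n τ s : ℕ) (P : Fin n → K) (hP : Function.Injective P)
    (r : Fin n → K) (β₀ β₁ : Polynomial K)
    (hmem : ∀ i : Fin n, β₀.eval (P i) + r i * β₁.eval (P i) = 0)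
    (hβ₁ : β₁ ≠ 0)
    (hlt : β₀.natDegree ≤ β₁.natDegree + s)
    (hdeg : β₁.natDegree + τ + s < n)
    (f : Polynomial K) (hf : f.natDegree ≤ s)
    (hdist : ({i : Fin n | f.eval (P i) ≠ r i}).ncard ≤ τ) :
    β₀ = -(f * β₁) := by
  classical
  set g : Polynomial K := β₀ + f * β₁ with hg
  suffices hg0 : g = 0 by
    have := hg ▸ hg0
    linear_combination this
  -- the set of agreement positions
  set S : Finset (Fin n) := Finset.univ.filter (fun i => f.eval (P i) = r i) with hS
  have hcompl : (Finset.univ.filter (fun i => f.eval (P i) ≠ r i)).card ≤ τ := by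
    have : ({i : Fin n | f.eval (P i) ≠ r i}).ncard
        = (Finset.univ.filter (fun i => f.eval (P i) ≠ r i)).card := by
      rw [Set.ncard_eq_toFinset_card']
      congr 1
      ext i
      simp
    omega
  have hScard : n - τ ≤ S.card := by
    have h2 := Finset.card_filter_add_card_filter_not
      (s := (Finset.univ : Finset (Fin n))) (p := fun i => f.eval (P i) = r i)
    rw [hS]
    simp only [Finset.card_univ, Fintype.card_fin, ne_eq] at h2 hcompl ⊢
    omega
  -- g vanishes on the image of S under P
  have heval : ∀ x ∈ S.image P, g.eval x = 0 := by
    intro x hx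
    obtain ⟨i, hi, rfl⟩ := Finset.mem_image.mp hx
    have hir : f.eval (P i) = r i := (Finset.mem_filter.mp hi).2
    have h := hmem i
    rw [← hir] at h
    simp only [hg, Polynomial.eval_add, Polynomial.eval_mul]
    linear_combination h
  have hgdeg : g.natDegree ≤ β₁.natDegree + s := by
    refine le_trans (Polynomial.natDegree_add_le _ _) ?_
    refine max_le hlt ?_
    refine le_trans (Polynomial.natDegree_mul_le) ?_
    omega
  have hcard : g.natDegree < (S.image P).card := by
    rw [Finset.card_image_of_injective _ hP]
    omega
  exact Polynomial.eq_zero_of_natDegree_lt_card_of_eval_eq_zero' g _ heval hcard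
end

section
/- Let K be a field, n, τ, s natural numbers, P : Fin n → K injective, and r : Fin n → K. Suppose β₀, β₁ ∈ K[X] satisfy β₀(P i) + r(i)·β₁(P i) = 0 for every i, β₁ ≠ 0, deg β₀ ≤ deg β₁ + s, and β₁ has minimal degree among nonzero second components of the interpolation module: for all γ₀, γ₁ ∈ K[X] with γ₁ ≠ 0 and γ₀(P i) + r(i)·γ₁(P i) = 0 for every i, deg β₁ ≤ deg γ₁. If s + 2·τ < n and f ∈ K[X] satisfies deg f ≤ s and |{i : f(P i) ≠ r(i)}| ≤ τ, then β₀ = −f·β₁. (Genus-zero instance of Proposition 7: when s < n − g − 2τ, the unique codeword within distance τ is recovered as f = −α₀/α₁ from the minimal element of the Gröbner basis of the interpolation module.) -/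
/-- Genus-zero instance of Proposition 7: if `β₁` has minimal degree among the
nonzero second components of the interpolation module and `s + 2τ < n`, then any
`f` with `deg f ≤ s` within Hamming distance `τ` from `r` satisfies `β₀ = −f·β₁`. -/
theorem minimal_interpolation_determines_message
    (K : Type*) [Field K] (n τ s : ℕ) (P : Fin n → K) (hP : Function.Injective P)
    (r : Fin n → K) (β₀ β₁ : Polynomial K)
    (hmem : ∀ i : Fin n, β₀.eval (P i) + r i * β₁.eval (P i) = 0)
    (hβ₁ : β₁ ≠ 0)
    (hlt : β₀.natDegree ≤ β₁.natDegree + s)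
    (hmin : ∀ γ₀ γ₁ : Polynomial K, γ₁ ≠ 0 →
      (∀ i : Fin n, γ₀.eval (P i) + r i * γ₁.eval (P i) = 0) →
      β₁.natDegree ≤ γ₁.natDegree)
    (hs : s + 2 * τ < n)
    (f : Polynomial K) (hf : f.natDegree ≤ s)
    (hdist : ({i : Fin n | f.eval (P i) ≠ r i}).ncard ≤ τ) :
    β₀ = -(f * β₁) := by
  classical
  set E : Finset (Fin n) := Finset.univ.filter (fun i => f.eval (P i) ≠ r i) with hE
  have hEcard : E.card ≤ τ := by
    have h1 : ({i : Fin n | f.eval (P i) ≠ r i}).ncard = E.card := by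
      rw [← Set.ncard_coe_finset]
      congr 1
      ext i
      simp [hE]
    omega
  -- error locator polynomial
  set γ₁ : Polynomial K := ∏ i ∈ E, (Polynomial.X - Polynomial.C (P i)) with hγ₁
  have hγ₁ne : γ₁ ≠ 0 := by
    apply Finset.prod_ne_zero_iff.mpr
    intro i _
    exact Polynomial.X_sub_C_ne_zero (P i)
  have hγ₁deg : γ₁.natDegree = E.card := by
    rw [hγ₁, Polynomial.natDegree_prod _ _ (fun i _ => Polynomial.X_sub_C_ne_zero (P i))]
    simp
  have hγmem : ∀ i : Fin n, (-(f * γ₁)).eval (P i) + r i * γ₁.eval (P i) = 0 := by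
    intro i
    by_cases hi : f.eval (P i) = r i
    · simp [hi]
    · have : γ₁.eval (P i) = 0 := by
        rw [hγ₁, Polynomial.eval_prod]
        apply Finset.prod_eq_zero (i := i)
        · simp [hE, hi]
        · simp
      simp [this]
  have hβ₁deg : β₁.natDegree ≤ τ := by
    have := hmin (-(f * γ₁)) γ₁ hγ₁ne hγmem
    omega
  -- the difference polynomial
  set g : Polynomial K := β₀ + f * β₁ with hg
  have hgdeg : g.natDegree ≤ s + τ := by
    apply le_trans (Polynomial.natDegree_add_le _ _)
    have h2 : (f * β₁).natDegree ≤ s + τ := by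
      apply le_trans (Polynomial.natDegree_mul_le)
      omega
    omega
  -- g vanishes on the agreement set
  set S : Finset (Fin n) := Finset.univ.filter (fun i => f.eval (P i) = r i) with hS
  have hSEcard : S.card + E.card = n := by
    have := Finset.card_filter_add_card_filter_not
      (s := (Finset.univ : Finset (Fin n))) (p := fun i => f.eval (P i) = r i)
    simpa [hS, hE] using this
  have hgzero : ∀ i ∈ S, g.eval (P i) = 0 := by
    intro i hi
    have hi' : f.eval (P i) = r i := by simpa [hS] using hi
    have := hmem i
    simp only [hg, Polynomial.eval_add, Polynomial.eval_mul, hi']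
    linear_combination this
  have hgz : g = 0 := by
    by_contra hgn
    have hsub : S.image P ⊆ g.roots.toFinset := by
      intro x hx
      obtain ⟨i, hi, rfl⟩ := Finset.mem_image.mp hx
      simp [Polynomial.mem_roots, hgn, Polynomial.IsRoot, hgzero i hi]
    have hcard : S.card ≤ g.natDegree := by
      calc S.card = (S.image P).card := (Finset.card_image_of_injective S hP).symm
        _ ≤ g.roots.toFinset.card := Finset.card_le_card hsub
        _ ≤ Multiset.card g.roots := g.roots.toFinset_card_le
        _ ≤ g.natDegree := Polynomial.card_roots' g
    omega
  have : β₀ + f * β₁ = 0 := hgz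
  linear_combination this
end
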